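/- arXiv:2501.07691 — 2 statements merged into one kernel-verified Lean document; each statement's English description precedes it below -/
import Mathlib

section
/- Let Γ be a group acting ℚ-linearly on a ℚ-vector space V, and form the semidirect product V ⋊ Γ of the additive group of V by Γ. Give V the structure of a (V ⋊ Γ)-module in which the subgroup V acts trivially and Γ acts by its given linear action. Then the sequence 0 → H¹(Γ, V) → H¹(V ⋊ Γ, V) → End_Γ(V) → 0 is exact, where the first map is inflation along the projection V ⋊ Γ → Γ, the second is induced by restriction of 1-cocycles to the subgroup V, and End_Γ(V) denotes the ℚ-linear Γ-equivariant endomorphisms of V (every additive Γ-equivariant map V → V between ℚ-vector spaces being automatically ℚ-linear). -/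
/-!
Since `V` acts trivially on itself, a cocycle `c` on `V ⋊ Γ` is additive on `V`, hence
`ℚ`-linear, and the relation `inr γ * inl x * inr γ⁻¹ = inl (ρ γ x)` makes it `Γ`-equivariant.
Every element factors as `inl x * inr γ`, and then `c (inl x * inr γ) = c (inl x) + c (inr γ)`:
so `c` vanishes on `V` exactly when it is inflated from `c ∘ inr`. Conversely, an equivariant
`f` applied to the `V`-coordinate is a cocycle, because the multiplication of `V ⋊ Γ` twists
that coordinate by `ρ`. Inflation is injective on `H¹` because `inr` splits the projection.
-/

/-- The action of `Γ` on `Multiplicative V` by group automorphisms induced by a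
`ℚ`-linear action `ρ : Γ →* (V ≃ₗ[ℚ] V)`; it is used to form the semidirect product
`V ⋊ Γ` (written multiplicatively as `Multiplicative V ⋊ Γ`). -/
def mulAutOfLinear {Γ V : Type*} [Group Γ] [AddCommGroup V] [Module ℚ V]
    (ρ : Γ →* (V ≃ₗ[ℚ] V)) : Γ →* MulAut (Multiplicative V) where
  toFun γ := AddEquiv.toMultiplicative (ρ γ).toAddEquiv
  map_one' := by
    ext x
    simp [AddEquiv.toMultiplicative, LinearEquiv.coe_toAddEquiv]
  map_mul' γ γ' := by
    ext x
    simp [AddEquiv.toMultiplicative, LinearEquiv.coe_toAddEquiv]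

open SemidirectProduct

section Cocycle

variable {R G H M : Type*} [Semiring R] [Group G] [Group H] [AddCommGroup M] [Module R M]

def IsCocycle (ρ : G →* (M ≃ₗ[R] M)) (c : G → M) : Prop :=
  ∀ g h, c (g * h) = c g + ρ g (c h)

variable {ρ : G →* (M ≃ₗ[R] M)} {c : G → M}

theorem IsCocycle.map_one (hc : IsCocycle ρ c) : c 1 = 0 := by
  simpa using hc 1 1

theorem IsCocycle.comp (hc : IsCocycle ρ c) (σ : H →* G) : IsCocycle (ρ.comp σ) (c ∘ σ) :=
  fun g h => by simpa using hc (σ g) (σ h)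

theorem IsCocycle.map_mul_of_eq_one (hc : IsCocycle ρ c) {g : G} (hg : ρ g = 1) (h : G) :
    c (g * h) = c g + c h := by
  rw [hc, hg]
  rfl

theorem IsCocycle.map_conj_of_eq_one (hc : IsCocycle ρ c) (g : G) {h : G} (hh : ρ h = 1) :
    c (g * h * g⁻¹) = ρ g (c h) := by
  have hconj : ρ (g * h * g⁻¹) = 1 := by simp [hh]
  have key := hc.map_mul_of_eq_one hconj g
  rw [inv_mul_cancel_right, hc, add_comm] at key
  exact (add_right_cancel key).symm

end Cocycle

theorem comp_rightHom_inl {N G W : Type*} [Group N] [Group G] [Monoid W] {φ : G →* MulAut N}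
    (ρ : G →* W) (n : N) : (ρ.comp rightHom) (inl n : N ⋊[φ] G) = 1 := by
  simp

section SemidirectProduct

variable {Γ V : Type*} [Group Γ] [AddCommGroup V] [Module ℚ V] {ρ : Γ →* (V ≃ₗ[ℚ] V)}

theorem toAdd_mul_left (g h : Multiplicative V ⋊[mulAutOfLinear ρ] Γ) :
    (g * h).left.toAdd = g.left.toAdd + ρ g.right h.left.toAdd :=
  rfl

theorem isCocycle_comp_toAdd_left {f : V →ₗ[ℚ] V} (hf : ∀ γ x, f (ρ γ x) = ρ γ (f x)) :
    IsCocycle (ρ.comp rightHom)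
      (fun g : Multiplicative V ⋊[mulAutOfLinear ρ] Γ => f g.left.toAdd) := by
  intro g h
  simp only [toAdd_mul_left, map_add, hf]
  rfl

variable {c : Multiplicative V ⋊[mulAutOfLinear ρ] Γ → V}

def IsCocycle.restrictInl (hc : IsCocycle (ρ.comp rightHom) c) : V →ₗ[ℚ] V :=
  (AddMonoidHom.mk' (fun x => c (inl (Multiplicative.ofAdd x)))
    (fun x y => by
      rw [ofAdd_add, map_mul]
      exact hc.map_mul_of_eq_one (comp_rightHom_inl ρ _) _)).toRatLinearMap

theorem IsCocycle.restrictInl_apply (hc : IsCocycle (ρ.comp rightHom) c) (x : V) :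
    hc.restrictInl x = c (inl (Multiplicative.ofAdd x)) :=
  rfl

theorem IsCocycle.restrictInl_map (hc : IsCocycle (ρ.comp rightHom) c) (γ : Γ) (x : V) :
    hc.restrictInl (ρ γ x) = ρ γ (hc.restrictInl x) := by
  have hconj := hc.map_conj_of_eq_one (inr γ) (comp_rightHom_inl ρ (Multiplicative.ofAdd x))
  rw [← map_inv, ← inl_aut] at hconj
  exact hconj

theorem IsCocycle.eq_comp_inr_right (hc : IsCocycle (ρ.comp rightHom) c)
    (hv : ∀ x : V, c (inl (Multiplicative.ofAdd x)) = 0) (g) : c g = c (inr g.right) := by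
  conv_lhs => rw [← inl_left_mul_inr_right g]
  rw [hc.map_mul_of_eq_one (comp_rightHom_inl ρ _), show c (inl g.left) = 0 from hv g.left.toAdd,
    zero_add]

end SemidirectProduct

/-- Let `Γ` act `ℚ`-linearly on a `ℚ`-vector space `V`, and form the
semidirect product `V ⋊ Γ`.  Giving `V` the `(V ⋊ Γ)`-module structure in which the
subgroup `V` acts trivially and `Γ` acts by its given linear action (so `(x, γ)` acts as
`ρ γ`), the sequence `0 → H¹(Γ, V) → H¹(V ⋊ Γ, V) → End_Γ(V) → 0` is exact, where the
first map is inflation along `V ⋊ Γ → Γ`, the second is induced by restriction of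
1-cocycles to the subgroup `V`, and `End_Γ(V)` is the `ℚ`-linear `Γ`-equivariant
endomorphisms of `V`.  Stated at the level of cocycles:
(1) inflation of a `Γ`-cocycle is a `(V ⋊ Γ)`-cocycle;
(2) a `Γ`-cocycle whose inflation is a coboundary is a coboundary (injectivity);
(3) the restriction of a `(V ⋊ Γ)`-cocycle to `V` is a `ℚ`-linear `Γ`-equivariant
    endomorphism of `V`;
(4) a `(V ⋊ Γ)`-cocycle restricts to `0` on `V` iff it is cohomologous to an inflated
    `Γ`-cocycle (exactness at the middle);
(5) every `ℚ`-linear `Γ`-equivariant endomorphism of `V` is the restriction of some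
    `(V ⋊ Γ)`-cocycle (surjectivity). -/
theorem stmt_8 {Γ V : Type*} [Group Γ] [AddCommGroup V] [Module ℚ V]
    (ρ : Γ →* (V ≃ₗ[ℚ] V)) :
    -- (1) inflation sends cocycles to cocycles
    (∀ c : Γ → V, (∀ γ γ' : Γ, c (γ * γ') = c γ + ρ γ (c γ')) →
      ∀ g h : Multiplicative V ⋊[mulAutOfLinear ρ] Γ,
        c (g * h).right = c g.right + ρ g.right (c h.right)) ∧
    -- (2) injectivity of the inflation map on H¹
    (∀ c : Γ → V, (∀ γ γ' : Γ, c (γ * γ') = c γ + ρ γ (c γ')) →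
      (∃ m : V, ∀ g : Multiplicative V ⋊[mulAutOfLinear ρ] Γ,
        c g.right = ρ g.right m - m) →
      ∃ m : V, ∀ γ : Γ, c γ = ρ γ m - m) ∧
    -- (3) restriction of a cocycle to V is a ℚ-linear Γ-equivariant endomorphism
    (∀ c : Multiplicative V ⋊[mulAutOfLinear ρ] Γ → V,
      (∀ g h, c (g * h) = c g + ρ g.right (c h)) →
      ∃ f : V →ₗ[ℚ] V, (∀ γ : Γ, ∀ x : V, f (ρ γ x) = ρ γ (f x)) ∧
        ∀ x : V, f x = c (SemidirectProduct.inl (Multiplicative.ofAdd x))) ∧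
    -- (4) exactness at the middle
    (∀ c : Multiplicative V ⋊[mulAutOfLinear ρ] Γ → V,
      (∀ g h, c (g * h) = c g + ρ g.right (c h)) →
      ((∀ x : V, c (SemidirectProduct.inl (Multiplicative.ofAdd x)) = 0) ↔
        ∃ c' : Γ → V, (∀ γ γ' : Γ, c' (γ * γ') = c' γ + ρ γ (c' γ')) ∧
          ∃ m : V, ∀ g : Multiplicative V ⋊[mulAutOfLinear ρ] Γ,
            c g = c' g.right + (ρ g.right m - m))) ∧
    -- (5) surjectivity onto End_Γ(V)
    (∀ f : V →ₗ[ℚ] V, (∀ γ : Γ, ∀ x : V, f (ρ γ x) = ρ γ (f x)) →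
      ∃ c : Multiplicative V ⋊[mulAutOfLinear ρ] Γ → V,
        (∀ g h, c (g * h) = c g + ρ g.right (c h)) ∧
        ∀ x : V, c (SemidirectProduct.inl (Multiplicative.ofAdd x)) = f x) := by
  refine ⟨fun c hc => IsCocycle.comp (ρ := ρ) hc rightHom,
    fun c _ ⟨m, hm⟩ => ⟨m, fun γ => hm (inr γ)⟩,
    fun c (hc : IsCocycle (ρ.comp rightHom) c) =>
      ⟨hc.restrictInl, hc.restrictInl_map, hc.restrictInl_apply⟩,
    fun c (hc : IsCocycle (ρ.comp rightHom) c) => ⟨fun hv => ?_, ?_⟩,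
    fun f hf => ⟨fun g => f g.left.toAdd, isCocycle_comp_toAdd_left hf, fun _ => rfl⟩⟩
  · refine ⟨c ∘ inr, IsCocycle.comp (ρ := ρ.comp rightHom) hc inr, 0, fun g => ?_⟩
    simpa using hc.eq_comp_inr_right hv g
  · rintro ⟨c', hc', m, hm⟩ x
    simpa [IsCocycle.map_one (ρ := ρ) hc'] using hm (inl (Multiplicative.ofAdd x))
end

section
/- Let Γ₁ and Γ₂ be groups and V a finite-dimensional representation of Γ₁ × Γ₂ over a field k which is semisimple as a representation of Γ₁ (by restriction). Each γ₁ ∈ Γ₁ acts on V by a Γ₂-equivariant automorphism, hence induces an action of Γ₁ on H¹(Γ₂, V). Then the natural map H¹(Γ₂, V^{Γ₁}) → H¹(Γ₂, V)^{Γ₁}, induced by the inclusion of the Γ₂-submodule V^{Γ₁} into V, is an isomorphism. -/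
/-!
Semisimplicity gives `V = V^{Γ₁} ⊕ I` with `I` the span of the vectors `γ₁ v - v`. Both summands
are `Γ₂`-stable since the actions commute, so the projection `q` onto `V^{Γ₁}` along `I` commutes
with `Γ₂`; applying `q` to a cobounding vector gives injectivity. For surjectivity, `(1 - q) ∘ c`
is a coboundary as soon as every `(γ₁ - 1) ∘ c` is, because `1 - q` lies in the `k`-span of the
operators `γ₁ - 1`. That holds because `End V ≅ V^{dim V}` is again semisimple under
postcomposition, the orbit of `1 - q` spans a space of maps into `I` and so contains no nonzero
invariants, and in a semisimple representation such an `x` lies in the span of the `g x - x`: a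
complement of that span inside the span of the orbit of `x` is fixed pointwise.
-/

open scoped MonoidAlgebra
open Submodule Set

theorem Subrepresentation.isCompl_toSubmodule_iff {A G W : Type*} [Semiring A] [Monoid G]
    [AddCommMonoid W] [Module A W] {ρ : Representation A G W} {P Q : Subrepresentation ρ} :
    IsCompl P.toSubmodule Q.toSubmodule ↔ IsCompl P Q := by
  rw [isCompl_iff, isCompl_iff, disjoint_iff, disjoint_iff, codisjoint_iff, codisjoint_iff,
    ← Subrepresentation.toSubmodule_injective.eq_iff (a := P ⊓ Q) (b := ⊥),
    ← Subrepresentation.toSubmodule_injective.eq_iff (a := P ⊔ Q) (b := ⊤)]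
  rfl

namespace Representation

variable {k G H U V : Type*} [Field k] [AddCommGroup U] [Module k U] [AddCommGroup V] [Module k V]

theorem isSemisimpleRepresentation_iff_forall_exists_isCompl [Monoid G] {σ : Representation k G V} :
    IsSemisimpleRepresentation σ ↔ ∀ W : Submodule k V, (∀ g, ∀ w ∈ W, σ g w ∈ W) →
      ∃ W' : Submodule k V, (∀ g, ∀ w ∈ W', σ g w ∈ W') ∧ IsCompl W W' := by
  refine ⟨fun _ W hW => ?_, fun h => ⟨fun P => ?_⟩⟩
  · obtain ⟨Q, hQ⟩ := exists_isCompl (⟨W, hW⟩ : Subrepresentation σ)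
    exact ⟨Q.toSubmodule, Q.apply_mem_toSubmodule, Subrepresentation.isCompl_toSubmodule_iff.2 hQ⟩
  · obtain ⟨W', hW', hcompl⟩ := h P.toSubmodule P.apply_mem_toSubmodule
    exact ⟨⟨W', hW'⟩, Subrepresentation.isCompl_toSubmodule_iff.1 hcompl⟩

theorem commute_comp_inl_comp_inr [Monoid G] [Monoid H] (ρ : Representation k (G × H) V)
    (g : G) (h : H) : Commute (ρ.comp (MonoidHom.inl G H) g) (ρ.comp (MonoidHom.inr G H) h) := by
  change ρ (g, 1) * ρ (1, h) = ρ (1, h) * ρ (g, 1)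
  rw [← map_mul, ← map_mul, Prod.mk_mul_mk, Prod.mk_mul_mk, one_mul, mul_one, one_mul, mul_one]

variable [Group G]

section LinHom

variable (σ : Representation k G V)

theorem asAlgebraHom_linHom_trivial (r : k[G]) (f : U →ₗ[k] V) :
    ((trivial k G U).linHom σ).asAlgebraHom r f = σ.asAlgebraHom r ∘ₗ f := by
  induction r using MonoidAlgebra.induction_linear with
  | zero => simp
  | add r s hr hs => simp only [map_add, LinearMap.add_apply, hr, hs, LinearMap.add_comp]
  | single g a => ext; simp [asAlgebraHom_single, linHom_apply]

noncomputable def linHomTrivialAsModuleEquiv :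
    (U →ₗ[k] σ.asModule) ≃ₗ[k[G]] ((trivial k G U).linHom σ).asModule where
  toFun f := f
  invFun f := f
  map_add' _ _ := rfl
  map_smul' r f := (asAlgebraHom_linHom_trivial σ r f).symm
  left_inv _ := rfl
  right_inv _ := rfl

instance [FiniteDimensional k U] [IsSemisimpleRepresentation σ] :
    IsSemisimpleRepresentation ((trivial k G U).linHom σ) := by
  rw [isSemisimpleRepresentation_iff_isSemisimpleModule_asModule] at *
  have := IsSemisimpleModule.congr ((Module.finBasis k U).constr k[G] (M' := σ.asModule)).symm
  exact IsSemisimpleModule.congr (linHomTrivialAsModuleEquiv σ).symm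

end LinHom

section Stability

variable {σ : Representation k G V}

theorem map_mem_invariants (g : G) {v : V} (hv : v ∈ σ.invariants) : σ g v ∈ σ.invariants :=
  fun h => by rw [hv g, hv h]

theorem map_mem_coinvariantsKer (g : G) {v : V} (hv : v ∈ Coinvariants.ker σ) :
    σ g v ∈ Coinvariants.ker σ := (map_span_le (σ g) _ _).2 (by
    rintro _ ⟨⟨h, v⟩, rfl⟩
    have : σ g (σ h v - v) = (σ (g * h) v - v) - (σ g v - v) := by
      rw [map_sub, map_mul, Module.End.mul_apply]; abel
    exact this ▸ sub_mem (Coinvariants.sub_mem_ker _ _) (Coinvariants.sub_mem_ker _ _))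
    (mem_map_of_mem hv)

end Stability

section Semisimple

variable {σ : Representation k G V} [IsSemisimpleRepresentation σ]

theorem mem_span_range_sub_self (x : V)
    (hx : ∀ y ∈ span k (range fun g => σ g x), y ∈ σ.invariants → y = 0) :
    x ∈ span k (range fun g => σ g x - x) := by
  set A := span k (range fun g => σ g x)
  set J := span k (range fun g => σ g x - x)
  have hxA : x ∈ A := subset_span ⟨1, by simp⟩
  have hJA : J ≤ A := span_le.2 <| by
    rintro _ ⟨g, rfl⟩
    exact A.sub_mem (subset_span ⟨g, rfl⟩) hxA
  have hAJ : ∀ g, ∀ y ∈ A, σ g y - y ∈ J := fun g y hy => (map_span_le (σ g - 1) _ J).2 (by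
    rintro _ ⟨h, rfl⟩
    have : (σ g - 1) (σ h x) = (σ (g * h) x - x) - (σ h x - x) := by
      rw [LinearMap.sub_apply, map_mul, Module.End.mul_apply, Module.End.one_apply]; abel
    exact this ▸ J.sub_mem (subset_span ⟨g * h, rfl⟩) (subset_span ⟨h, rfl⟩)) (mem_map_of_mem hy)
  have hJ : ∀ g, ∀ y ∈ J, σ g y ∈ J := fun g y hy => by
    simpa using J.add_mem (hAJ g y (hJA hy)) hy
  obtain ⟨C, hC, hJC⟩ := isSemisimpleRepresentation_iff_forall_exists_isCompl.1 ‹_› J hJ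
  obtain ⟨j, hj, y, hy, rfl⟩ := mem_sup.1 (hJC.sup_eq_top ▸ mem_top : x ∈ J ⊔ C)
  have hyA : y ∈ A := by simpa using A.sub_mem hxA (hJA hj)
  have hyfix : y ∈ σ.invariants := fun g => sub_eq_zero.1 <|
    (disjoint_def.1 hJC.disjoint) _ (hAJ g y hyA) (C.sub_mem (hC g y hy) hy)
  rwa [hx y hyA hyfix, add_zero]

theorem isCompl_invariants_coinvariantsKer : IsCompl σ.invariants (Coinvariants.ker σ) := by
  obtain ⟨D, hD, hinvD⟩ := isSemisimpleRepresentation_iff_forall_exists_isCompl.1 ‹_›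
    σ.invariants map_mem_invariants
  obtain ⟨C, hC, hkerC⟩ := isSemisimpleRepresentation_iff_forall_exists_isCompl.1 ‹_›
    (Coinvariants.ker σ) map_mem_coinvariantsKer
  have hkerD : Coinvariants.ker σ ≤ D := span_le.2 <| by
    rintro _ ⟨⟨g, v⟩, rfl⟩
    obtain ⟨u, hu, w, hw, rfl⟩ := mem_sup.1 (hinvD.sup_eq_top ▸ mem_top : v ∈ σ.invariants ⊔ D)
    simpa [hu g] using D.sub_mem (hD g w hw) hw
  have hCinv : C ≤ σ.invariants := fun x hx g => sub_eq_zero.1 <|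
    (disjoint_def.1 hkerC.disjoint) _ (Coinvariants.sub_mem_ker g x) (C.sub_mem (hC g x hx) hx)
  exact ⟨hinvD.disjoint.mono_right hkerD, (hkerC.codisjoint.mono_right hCinv).symm⟩

variable (σ) in
noncomputable def invariantsProjection : Module.End k V :=
  σ.invariants.projection (Coinvariants.ker σ) isCompl_invariants_coinvariantsKer

theorem invariantsProjection_apply_mem (v : V) : invariantsProjection σ v ∈ σ.invariants :=
  projection_apply_mem _ v

theorem invariantsProjection_apply_of_mem {v : V} (hv : v ∈ σ.invariants) :
    invariantsProjection σ v = v :=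
  projection_apply_of_mem_left _ hv

theorem sub_invariantsProjection_apply_mem (v : V) :
    v - invariantsProjection σ v ∈ Coinvariants.ker σ :=
  sub_projection_mem _ v

theorem commute_invariantsProjection {T : Module.End k V} (hT : ∀ g, Commute (σ g) T) :
    Commute (invariantsProjection σ) T := by
  unfold invariantsProjection
  rw [LinearMap.IsIdempotentElem.commute_iff (isIdempotentElem_projection _), range_projection,
    ker_projection, Module.End.mem_invtSubmodule, Module.End.mem_invtSubmodule]
  refine ⟨fun v hv g => ?_, span_le.2 ?_⟩
  · rw [← Module.End.mul_apply, (hT g).eq, Module.End.mul_apply, hv g]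
  · rintro _ ⟨⟨g, v⟩, rfl⟩
    rw [SetLike.mem_coe, mem_comap, map_sub, ← Module.End.mul_apply, ← (hT g).eq,
      Module.End.mul_apply]
    exact Coinvariants.sub_mem_ker g (T v)

theorem one_sub_invariantsProjection_mem_span [FiniteDimensional k V] :
    1 - invariantsProjection σ ∈ span k (range fun g => σ g - 1) := by
  set L := (trivial k G V).linHom σ
  have hL : ∀ g, L g (1 - invariantsProjection σ) - (1 - invariantsProjection σ) = σ g - 1 :=
    fun g => by
      ext v
      simp [L, linHom_apply, invariantsProjection_apply_mem v g]
  have hspan : span k (range fun g => L g (1 - invariantsProjection σ)) ≤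
      ⨅ v, (Coinvariants.ker σ).comap (LinearMap.applyₗ v) := span_le.2 <| by
    rintro _ ⟨g, rfl⟩
    simp only [SetLike.mem_coe, mem_iInf, mem_comap]
    exact fun v => map_mem_coinvariantsKer g (sub_invariantsProjection_apply_mem v)
  simpa only [hL] using mem_span_range_sub_self (σ := L) _ fun f hf hfix => LinearMap.ext fun v =>
    (disjoint_def.1 isCompl_invariants_coinvariantsKer.disjoint) _
      (fun g => by simpa [L, linHom_apply] using LinearMap.congr_fun (hfix g) v)
      ((mem_iInf _).1 (hspan hf) v)

end Semisimple

section Cohomology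

variable [Monoid H] {σ : Representation k G V} {τ : Representation k H V}

variable (τ) in
def oneCoboundaries : Submodule k (H → V) :=
  LinearMap.range (LinearMap.pi fun h => τ h - 1)

theorem mem_oneCoboundaries {c : H → V} :
    c ∈ oneCoboundaries τ ↔ ∃ m, ∀ h, c h = τ h m - m := by
  simp [oneCoboundaries, funext_iff, eq_comm]

theorem comp_mem_oneCoboundaries_of_mem_span {S : Set (Module.End k V)} {c : H → V}
    (hS : ∀ f ∈ S, ⇑f ∘ c ∈ oneCoboundaries τ) {f : Module.End k V} (hf : f ∈ span k S) :
    ⇑f ∘ c ∈ oneCoboundaries τ :=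
  span_le (p := (oneCoboundaries τ).comap (LinearMap.pi fun h => LinearMap.applyₗ (c h))).2 hS hf

variable [IsSemisimpleRepresentation σ]

theorem exists_mem_invariants_coboundary (hcomm : ∀ g h, Commute (σ g) (τ h)) {c : H → V}
    (hc : ∀ h, c h ∈ σ.invariants) {m : V} (hm : ∀ h, c h = τ h m - m) :
    ∃ m' ∈ σ.invariants, ∀ h, c h = τ h m' - m' := by
  refine ⟨invariantsProjection σ m, invariantsProjection_apply_mem m, fun h => ?_⟩
  calc c h = invariantsProjection σ (c h) := (invariantsProjection_apply_of_mem (hc h)).symm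
    _ = τ h (invariantsProjection σ m) - invariantsProjection σ m := by
      rw [hm, map_sub, ← Module.End.mul_apply, (commute_invariantsProjection (hcomm · h)).eq,
        Module.End.mul_apply]

theorem exists_cohomologous_invariant_cocycle [FiniteDimensional k V]
    (hcomm : ∀ g h, Commute (σ g) (τ h)) {c : H → V} (hc : ∀ h h', c (h * h') = c h + τ h (c h'))
    (hinv : ∀ g, (fun h => σ g (c h) - c h) ∈ oneCoboundaries τ) :
    ∃ c' : H → V, (∀ h h', c' (h * h') = c' h + τ h (c' h')) ∧ (∀ h, c' h ∈ σ.invariants) ∧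
      ∃ m, ∀ h, c h = c' h + (τ h m - m) := by
  have hq : ∀ h v, invariantsProjection σ (τ h v) = τ h (invariantsProjection σ v) :=
    fun h => LinearMap.congr_fun (commute_invariantsProjection (hcomm · h)).eq
  obtain ⟨m, hm⟩ := mem_oneCoboundaries.1 <| comp_mem_oneCoboundaries_of_mem_span
    (by rintro _ ⟨g, rfl⟩; exact hinv g) one_sub_invariantsProjection_mem_span
  refine ⟨fun h => invariantsProjection σ (c h), fun h h' => by simp only [hc, map_add, hq],
    fun h => invariantsProjection_apply_mem _, m, fun h => ?_⟩
  rw [← hm h]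
  simp

end Cohomology

end Representation

open Representation

/-- Let `Γ₁`, `Γ₂` be groups and `V` a finite-dimensional representation
of `Γ₁ × Γ₂` over a field `k`, semisimple as a representation of `Γ₁`.  Each `γ₁ ∈ Γ₁`
acts on `V` by a `Γ₂`-equivariant automorphism, hence `Γ₁` acts on `H¹(Γ₂, V)` (on
cocycles, by `(γ₁ · c) γ₂ = ρ (γ₁, 1) (c γ₂)`).  Then the natural map
`H¹(Γ₂, V^{Γ₁}) → H¹(Γ₂, V)^{Γ₁}` induced by the inclusion `V^{Γ₁} ⊆ V` is an
isomorphism.  Stated at the level of cocycles: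
(injectivity) a `Γ₂`-cocycle with values in `V^{Γ₁}` which is a coboundary of an element
of `V` is a coboundary of an element of `V^{Γ₁}`;
(surjectivity) a `Γ₂`-cocycle `c` with values in `V` whose class is `Γ₁`-invariant (i.e.
for every `γ₁`, the cocycle `γ₂ ↦ ρ (γ₁,1) (c γ₂) - c γ₂` is a coboundary) is
cohomologous to a `Γ₂`-cocycle with values in `V^{Γ₁}`. -/
theorem stmt_10 {Γ₁ Γ₂ : Type*} [Group Γ₁] [Group Γ₂] {k V : Type*} [Field k]
    [AddCommGroup V] [Module k V] [FiniteDimensional k V]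
    (ρ : Representation k (Γ₁ × Γ₂) V)
    (hss : ∀ W : Submodule k V, (∀ γ₁ : Γ₁, ∀ w ∈ W, ρ (γ₁, 1) w ∈ W) →
      ∃ W' : Submodule k V, (∀ γ₁ : Γ₁, ∀ w ∈ W', ρ (γ₁, 1) w ∈ W') ∧ IsCompl W W') :
    -- injectivity of H¹(Γ₂, V^{Γ₁}) → H¹(Γ₂, V)^{Γ₁}
    (∀ c : Γ₂ → V,
      (∀ γ γ' : Γ₂, c (γ * γ') = c γ + ρ (1, γ) (c γ')) →
      (∀ γ₂ : Γ₂, ∀ γ₁ : Γ₁, ρ (γ₁, 1) (c γ₂) = c γ₂) →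
      (∃ m : V, ∀ γ₂ : Γ₂, c γ₂ = ρ (1, γ₂) m - m) →
      ∃ m : V, (∀ γ₁ : Γ₁, ρ (γ₁, 1) m = m) ∧ ∀ γ₂ : Γ₂, c γ₂ = ρ (1, γ₂) m - m) ∧
    -- surjectivity of H¹(Γ₂, V^{Γ₁}) → H¹(Γ₂, V)^{Γ₁}
    (∀ c : Γ₂ → V,
      (∀ γ γ' : Γ₂, c (γ * γ') = c γ + ρ (1, γ) (c γ')) →
      (∀ γ₁ : Γ₁, ∃ m : V, ∀ γ₂ : Γ₂, ρ (γ₁, 1) (c γ₂) - c γ₂ = ρ (1, γ₂) m - m) →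
      ∃ c' : Γ₂ → V,
        (∀ γ γ' : Γ₂, c' (γ * γ') = c' γ + ρ (1, γ) (c' γ')) ∧
        (∀ γ₂ : Γ₂, ∀ γ₁ : Γ₁, ρ (γ₁, 1) (c' γ₂) = c' γ₂) ∧
        ∃ m : V, ∀ γ₂ : Γ₂, c γ₂ = c' γ₂ + (ρ (1, γ₂) m - m)) := by
  have : IsSemisimpleRepresentation (ρ.comp (MonoidHom.inl Γ₁ Γ₂)) :=
    isSemisimpleRepresentation_iff_forall_exists_isCompl.2 hss
  have hcomm := ρ.commute_comp_inl_comp_inr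
  exact ⟨fun c _ hfix ⟨m, hm⟩ => exists_mem_invariants_coboundary hcomm hfix hm,
    fun c hc hinv => exists_cohomologous_invariant_cocycle hcomm hc fun g =>
      mem_oneCoboundaries.2 (hinv g)⟩
end
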